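/- arXiv:2101.11410 — 2 statements merged into one kernel-verified Lean document; each statement's English description precedes it below -/
import Mathlib

section
/- Let W be a complex Hilbert space, A = B(W) the C*-algebra of bounded linear operators on W, and M a Hilbert C*-module over A. Let (w_i)_{i≥1} be a sequence in M such that ⟨w_i, w_j⟩ is a compact operator on W for all i, j, and let ε > 0. Then there exists a sequence (q_j)_{j≥1} in M such that: (i) each q_j is either 0 or normalized; (ii) ⟨q_i, q_j⟩ = 0 for i ≠ j; (iii) each q_j lies in the closed A-submodule of M generated by w_1,…,w_j; and (iv) for each j there exists v in the closed A-submodule generated by {q_i : i ≥ 1} with ‖w_j − v‖_M ≤ ε. -/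
/-- A (right) Hilbert C*-module over a C*-algebra `A`: a right `A`-module `M` with an
`A`-valued inner product, `A`-linear in the second variable, satisfying the listed axioms,
whose norm is `‖u‖ = ‖⟨u,u⟩‖^(1/2)` (so that completeness of `M` as a normed group is
completeness for this norm). -/
structure HilbertCStarModule (A : Type*) (M : Type*) [CStarAlgebra A] [PartialOrder A]
    [StarOrderedRing A] [NormedAddCommGroup M] where
  smul : M → A → M
  inner : M → M → A
  add_smul : ∀ (u v : M) (c : A), smul (u + v) c = smul u c + smul v c
  smul_add : ∀ (u : M) (c d : A), smul u (c + d) = smul u c + smul u d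
  smul_mul : ∀ (u : M) (c d : A), smul u (c * d) = smul (smul u c) d
  smul_one : ∀ u : M, smul u 1 = u
  inner_add_right : ∀ u v w : M, inner u (v + w) = inner u v + inner u w
  inner_smul_right : ∀ (u v : M) (c : A), inner u (smul v c) = inner u v * c
  star_inner : ∀ u v : M, star (inner u v) = inner v u
  inner_self_nonneg : ∀ u : M, 0 ≤ inner u u
  inner_self_eq_zero : ∀ u : M, inner u u = 0 → u = 0
  norm_eq : ∀ u : M, ‖u‖ = Real.sqrt ‖inner u u‖

/-!
Over `B(W)` the normalization step works because a positive compact operator `T = ⟨u, u⟩`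
has a spectral gap `d ∈ (ε²/2, ε²)`: its nonzero spectrum consists of eigenvalues with mutually
orthogonal eigenvectors, and infinitely many of them above `ε²/2` would give unit vectors whose
images under `T` stay `ε²/2` apart. Cutting the spectrum at `d`, with `b = T^(-1/2)` on `[d, ∞)` and
`0` below, makes `⟨u b, u b⟩ = b T b` the spectral projection `p` of `[d, ∞)`, nonzero as soon as
`‖u‖ > ε`, while `u - u p = u - (u b)(T b)` has `⟨·,·⟩ = (1 - p) T (1 - p)` of norm at most
`d ≤ ε²`. Compactness of `⟨q̂ⱼ, q̂ⱼ⟩` is inherited from the `⟨wᵢ, wₖ⟩`, as `q̂ⱼ` lies in the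
`B(W)`-span of `w₀, …, wⱼ`. Orthogonality is the classical computation; it only needs
`q ⟨q, q⟩ = q`, which holds whenever `⟨q, q⟩` is idempotent.
-/

open Set Finset

theorem IsCompactOperator.exists_ne_norm_sub_lt {𝕜 X : Type*} [NontriviallyNormedField 𝕜]
    [NormedAddCommGroup X] [NormedSpace 𝕜 X] {T : X →L[𝕜] X} (hT : IsCompactOperator T)
    {x : ℕ → X} {R : ℝ} (hx : ∀ n, ‖x n‖ ≤ R) {r : ℝ} (hr : 0 < r) :
    ∃ m n, m ≠ n ∧ ‖T (x m) - T (x n)‖ < r := by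
  obtain ⟨K, hK, hTK⟩ := hT.image_closedBall_subset_compact R
  obtain ⟨y, -, φ, hφ, hy⟩ :=
    hK.tendsto_subseq fun n ↦ hTK ⟨x n, mem_closedBall_zero_iff.2 (hx n), rfl⟩
  obtain ⟨N, hN⟩ := Metric.cauchySeq_iff'.1 hy.cauchySeq r hr
  refine ⟨φ (N + 1), φ N, hφ.injective.ne (by omega), ?_⟩
  simpa [dist_eq_norm] using hN (N + 1) (by omega)

theorem IsCompactOperator.exists_unit_eigenvector {𝕜 X : Type*} [RCLike 𝕜]
    [NormedAddCommGroup X] [NormedSpace 𝕜 X] [CompleteSpace X] {T : X →L[𝕜] X}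
    (hT : IsCompactOperator T) {μ : 𝕜} (hμ : μ ≠ 0) (hμT : μ ∈ spectrum 𝕜 T) :
    ∃ e : X, ‖e‖ = 1 ∧ T e = μ • e := by
  obtain ⟨v, hv⟩ := ((hT.hasEigenvalue_iff_mem_spectrum hμ).2 hμT).exists_hasEigenvector
  refine ⟨(‖v‖⁻¹ : 𝕜) • v, ?_, ?_⟩
  · rw [norm_smul, norm_inv, RCLike.norm_ofReal, abs_norm,
      inv_mul_cancel₀ (norm_ne_zero_iff.2 hv.2)]
  · rw [map_smul, smul_comm]
    exact congrArg _ (Module.End.mem_eigenspace_iff.1 hv.1)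

theorem IsCompactOperator.not_Ioo_subset_spectrum {E : Type*}
    [NormedAddCommGroup E] [InnerProductSpace ℂ E] [CompleteSpace E] {T : E →L[ℂ] E}
    (hT : IsCompactOperator T) (hTsa : IsSelfAdjoint T) {a b : ℝ} (ha : 0 < a) (hab : a < b) :
    ¬ Ioo a b ⊆ spectrum ℝ T := by
  intro hsub
  let μ := (Ioo_infinite hab).natEmbedding
  have hμa (n : ℕ) : a < (μ n : ℝ) := (μ n).2.1
  have hμ (n : ℕ) : ∃ e : E, ‖e‖ = 1 ∧ T e = ((μ n : ℝ) : ℂ) • e :=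
    hT.exists_unit_eigenvector (Complex.ofReal_ne_zero.2 (ha.trans (hμa n)).ne')
      ((spectrum.algebraMap_mem_iff ℂ).2 (hsub (μ n).2))
  choose e he1 heT using hμ
  obtain ⟨m, n, hmn, hlt⟩ := hT.exists_ne_norm_sub_lt (fun n ↦ (he1 n).le) ha
  have horth : inner ℂ (T (e m)) (T (e n)) = 0 := by
    have hne : ((μ m : ℝ) : ℂ) ≠ (μ n : ℝ) := by
      rw [Ne, Complex.ofReal_inj, ← Subtype.ext_iff]; exact μ.injective.ne hmn
    have := hTsa.isSymmetric.orthogonalFamily_eigenspaces hne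
      ⟨e m, Module.End.mem_eigenspace_iff.2 (heT m)⟩
      ⟨e n, Module.End.mem_eigenspace_iff.2 (heT n)⟩
    simp only [Submodule.coe_subtypeₗᵢ, Submodule.coe_subtype] at this
    rw [heT, heT, inner_smul_left, inner_smul_right, this, mul_zero, mul_zero]
  have hnorm : ‖T (e m)‖ = μ m := by
    rw [heT, norm_smul, Complex.norm_real, Real.norm_eq_abs, he1, mul_one,
      abs_of_pos (ha.trans (hμa m))]
  have hle : ‖T (e m)‖ ≤ ‖T (e m) - T (e n)‖ := by
    refine (pow_le_pow_iff_left₀ (norm_nonneg _) (norm_nonneg _) two_ne_zero).1 ?_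
    rw [@norm_sub_sq ℂ, horth, map_zero, mul_zero, sub_zero]
    exact le_add_of_nonneg_right (sq_nonneg _)
  exact (hμa m).not_ge (hnorm ▸ hle.trans hlt.le)

theorem continuousOn_ite_lt {α β : Type*} [LinearOrder α] [TopologicalSpace α] [OrderTopology α]
    [TopologicalSpace β] {f g : α → β} {s : Set α} {d : α} (hd : d ∉ s)
    (hf : ∀ t < d, ContinuousAt f t) (hg : ∀ t, d < t → ContinuousAt g t) :
    ContinuousOn (fun t ↦ if t < d then f t else g t) s := by
  intro t ht
  refine ContinuousAt.continuousWithinAt ?_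
  rcases lt_trichotomy t d with htd | rfl | hdt
  · exact (hf t htd).congr <| (eventually_lt_nhds htd).mono fun x hx ↦ (if_pos hx).symm
  · exact absurd ht hd
  · exact (hg t hdt).congr <| (eventually_gt_nhds hdt).mono fun x hx ↦ (if_neg hx.not_gt).symm

theorem cfc_mul_self_mul_cfc {A : Type*} {p : A → Prop} [Ring A] [StarRing A] [TopologicalSpace A]
    [Algebra ℝ A] [ContinuousFunctionalCalculus ℝ A p] {a : A} (ha : p a) (f : ℝ → ℝ)
    (hf : ContinuousOn f (spectrum ℝ a)) :
    cfc f a * a * cfc f a = cfc (fun t ↦ f t * t * f t) a := by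
  rw [cfc_mul (fun t ↦ f t * t) f a (hf.mul continuousOn_id) hf,
    cfc_mul f (fun t ↦ t) a hf continuousOn_id, cfc_id' ℝ a]

theorem exists_isIdempotentElem_star_mul_mul_of_notMem_spectrum {A : Type*} [CStarAlgebra A]
    [PartialOrder A] [StarOrderedRing A] {a : A} (ha : 0 ≤ a) {d : ℝ}
    (hd : 0 < d) (hgap : d ∉ spectrum ℝ a) (hda : d < ‖a‖) :
    ∃ b c : A, star b * a * b ≠ 0 ∧ IsIdempotentElem (star b * a * b) ∧
      ‖star (1 - b * c) * a * (1 - b * c)‖ ≤ d := by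
  have hsa : IsSelfAdjoint a := .of_nonneg ha
  set χ : ℝ → ℝ := fun t ↦ if t < d then 0 else 1
  set f : ℝ → ℝ := fun t ↦ if t < d then 0 else (√t)⁻¹
  have hχ : ContinuousOn χ (spectrum ℝ a) :=
    continuousOn_ite_lt hgap (fun _ _ ↦ continuousAt_const) fun _ _ ↦ continuousAt_const
  have hf : ContinuousOn f (spectrum ℝ a) :=
    continuousOn_ite_lt hgap (fun _ _ ↦ continuousAt_const) fun t ht ↦
      Real.continuous_sqrt.continuousAt.inv₀ (Real.sqrt_pos.2 (hd.trans ht)).ne'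
  set b := cfc f a
  set p := cfc χ a
  have hb : star b = b := (cfc_predicate f a).star_eq
  have hbab : b * a * b = p := by
    rw [cfc_mul_self_mul_cfc hsa f hf]
    refine cfc_congr fun t _ ↦ ?_
    simp only [f, χ]
    split_ifs with htd
    · ring
    · have ht : 0 < t := hd.trans_le (not_lt.1 htd)
      field_simp
      exact (Real.sq_sqrt ht.le).symm
  have hp : IsIdempotentElem p := by
    rw [IsIdempotentElem, ← cfc_mul χ χ a hχ hχ]
    refine cfc_congr fun t _ ↦ ?_
    simp only [χ]
    split_ifs <;> norm_num
  have hrest : star (1 - p) * a * (1 - p) = cfc (fun t ↦ if t < d then t else 0) a := by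
    have h1p : 1 - p = cfc (fun t ↦ 1 - χ t) a := by
      rw [cfc_sub (fun _ ↦ (1 : ℝ)) χ a continuousOn_const hχ, cfc_const_one ℝ a]
    rw [h1p, (cfc_predicate (fun t ↦ 1 - χ t) a).star_eq,
      cfc_mul_self_mul_cfc hsa (fun t ↦ 1 - χ t) (continuousOn_const.sub hχ)]
    refine cfc_congr fun t _ ↦ ?_
    simp only [χ]
    split_ifs <;> ring
  have hrest_le : ‖star (1 - p) * a * (1 - p)‖ ≤ d := by
    rw [hrest]
    refine norm_cfc_le hd.le fun t ht ↦ ?_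
    have ht0 : 0 ≤ t := spectrum_nonneg_of_nonneg ha ht
    split_ifs with htd
    · rw [Real.norm_of_nonneg ht0]; exact htd.le
    · simpa using hd.le
  refine ⟨b, a * b, ?_, ?_, ?_⟩
  · rw [hb, hbab]
    intro hp0
    rw [hp0] at hrest_le
    simp only [sub_zero, star_one, one_mul, mul_one] at hrest_le
    exact hrest_le.not_gt hda
  · rwa [hb, hbab]
  · rwa [← mul_assoc, hbab]

namespace HilbertCStarModule

section

variable {A M : Type*} [CStarAlgebra A] [PartialOrder A] [StarOrderedRing A]
  [NormedAddCommGroup M] (H : HilbertCStarModule A M)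

def innerRightHom (u : M) : M →+ A := AddMonoidHom.mk' (H.inner u) (H.inner_add_right u)

def innerLeftHom (v : M) : M →+ A :=
  AddMonoidHom.mk' (H.inner · v) fun u u' ↦ by
    simp only [← H.star_inner v, H.inner_add_right, star_add]

def smulLeftHom (c : A) : M →+ M := AddMonoidHom.mk' (H.smul · c) (H.add_smul · · c)

def smulRightHom (u : M) : A →+ M := AddMonoidHom.mk' (H.smul u) (H.smul_add u)

theorem inner_zero_right (u : M) : H.inner u 0 = 0 := map_zero (H.innerRightHom u)

theorem inner_zero_left (v : M) : H.inner 0 v = 0 := map_zero (H.innerLeftHom v)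

theorem inner_sub_right (u v v' : M) : H.inner u (v - v') = H.inner u v - H.inner u v' :=
  map_sub (H.innerRightHom u) v v'

theorem inner_sub_left (u u' v : M) : H.inner (u - u') v = H.inner u v - H.inner u' v :=
  map_sub (H.innerLeftHom v) u u'

theorem inner_sum_right {ι : Type*} (s : Finset ι) (u : M) (f : ι → M) :
    H.inner u (∑ i ∈ s, f i) = ∑ i ∈ s, H.inner u (f i) :=
  map_sum (H.innerRightHom u) f s

theorem inner_sum_left {ι : Type*} (s : Finset ι) (f : ι → M) (v : M) :
    H.inner (∑ i ∈ s, f i) v = ∑ i ∈ s, H.inner (f i) v :=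
  map_sum (H.innerLeftHom v) f s

theorem inner_smul_left (u v : M) (c : A) : H.inner (H.smul u c) v = star c * H.inner u v := by
  rw [← H.star_inner, H.inner_smul_right, star_mul, H.star_inner]

theorem zero_smul (c : A) : H.smul 0 c = 0 := map_zero (H.smulLeftHom c)

theorem sum_smul {ι : Type*} (s : Finset ι) (f : ι → M) (c : A) :
    H.smul (∑ i ∈ s, f i) c = ∑ i ∈ s, H.smul (f i) c :=
  map_sum (H.smulLeftHom c) f s

theorem smul_zero (u : M) : H.smul u 0 = 0 := map_zero (H.smulRightHom u)

theorem smul_neg (u : M) (c : A) : H.smul u (-c) = -H.smul u c := map_neg (H.smulRightHom u) c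

theorem smul_sub (u : M) (c d : A) : H.smul u (c - d) = H.smul u c - H.smul u d :=
  map_sub (H.smulRightHom u) c d

theorem norm_sq (u : M) : ‖u‖ ^ 2 = ‖H.inner u u‖ := by
  rw [H.norm_eq, Real.sq_sqrt (norm_nonneg _)]

theorem inner_sub_smul_self (u : M) (s : A) :
    H.inner (u - H.smul u s) (u - H.smul u s) = star (1 - s) * H.inner u u * (1 - s) := by
  have : u - H.smul u s = H.smul u (1 - s) := by rw [H.smul_sub, H.smul_one]
  rw [this, H.inner_smul_left, H.inner_smul_right, mul_assoc]

theorem smul_inner_self_of_isIdempotentElem {q : M} (hq : IsIdempotentElem (H.inner q q)) :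
    H.smul q (H.inner q q) = q := by
  have hsa : star (H.inner q q) = H.inner q q := H.star_inner q q
  refine (sub_eq_zero.1 (H.inner_self_eq_zero _ ?_)).symm
  rw [inner_sub_smul_self, star_sub, star_one, hsa, sub_mul, one_mul, hq.eq, sub_self, zero_mul]

theorem inner_self_mul_inner_of_isIdempotentElem {q : M} (hq : IsIdempotentElem (H.inner q q))
    (v : M) : H.inner q q * H.inner q v = H.inner q v := by
  conv_rhs => rw [← H.smul_inner_self_of_isIdempotentElem hq]
  rw [inner_smul_left, H.star_inner]

theorem inner_sub_sum_smul_inner {ι : Type*} {s : Finset ι} {q : ι → M} {i : ι} (hi : i ∈ s)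
    (hidem : IsIdempotentElem (H.inner (q i) (q i)))
    (horth : ∀ k ∈ s, k ≠ i → H.inner (q i) (q k) = 0) (v : M) :
    H.inner (q i) (v - ∑ k ∈ s, H.smul (q k) (H.inner (q k) v)) = 0 := by
  rw [inner_sub_right, inner_sum_right, Finset.sum_eq_single_of_mem i hi, H.inner_smul_right,
    H.inner_self_mul_inner_of_isIdempotentElem hidem, sub_self]
  intro k hk hki
  rw [H.inner_smul_right, horth k hk hki, zero_mul]

def span (w : ℕ → M) (n : ℕ) : AddSubgroup M where
  carrier := {u | ∃ c : Fin n → A, u = ∑ i, H.smul (w i.val) (c i)}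
  add_mem' := by
    rintro _ _ ⟨c, rfl⟩ ⟨d, rfl⟩
    exact ⟨c + d, by simp only [Pi.add_apply, H.smul_add, Finset.sum_add_distrib]⟩
  zero_mem' := ⟨0, by simp only [Pi.zero_apply, H.smul_zero, Finset.sum_const_zero]⟩
  neg_mem' := by
    rintro _ ⟨c, rfl⟩
    exact ⟨-c, by simp only [Pi.neg_apply, H.smul_neg, Finset.sum_neg_distrib]⟩

variable {H}

theorem smul_mem_span {w : ℕ → M} {n : ℕ} {u : M} (hu : u ∈ H.span w n) (a : A) :
    H.smul u a ∈ H.span w n := by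
  obtain ⟨c, rfl⟩ := hu
  exact ⟨fun i ↦ c i * a, by simp only [H.sum_smul, H.smul_mul]⟩

theorem mem_span_of_lt (w : ℕ → M) {i n : ℕ} (hi : i < n) : w i ∈ H.span w n := by
  classical
  refine ⟨Pi.single ⟨i, hi⟩ 1, ?_⟩
  rw [Finset.sum_eq_single_of_mem ⟨i, hi⟩ (Finset.mem_univ _), Pi.single_eq_same, H.smul_one]
  intro k _ hk
  rw [Pi.single_eq_of_ne hk, H.smul_zero]

theorem span_mono (w : ℕ → M) {m n : ℕ} (hmn : m ≤ n) : H.span w m ≤ H.span w n := by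
  rintro _ ⟨c, rfl⟩
  exact AddSubgroup.sum_mem _ fun i _ ↦ smul_mem_span (mem_span_of_lt w (i.2.trans_le hmn)) _

variable (H)

def IsNormalized (q : M) : Prop := H.inner q q ≠ 0 ∧ IsIdempotentElem (H.inner q q)

def IsNormalizer (ε : ℝ) (u : M) (b : A) : Prop :=
  H.IsNormalized (H.smul u b) ∧ ∃ c : A, ‖u - H.smul u (b * c)‖ ≤ ε

noncomputable def normalizer (ε : ℝ) (u : M) : A := Classical.epsilon (H.IsNormalizer ε u)

theorem exists_isNormalizer_of_notMem_spectrum {u : M} {ε d : ℝ} (hε : 0 ≤ ε) (hd : 0 < d)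
    (hdε : d ≤ ε ^ 2) (hgap : d ∉ spectrum ℝ (H.inner u u)) (hεu : ε < ‖u‖) :
    ∃ b, H.IsNormalizer ε u b := by
  have hdu : d < ‖H.inner u u‖ := hdε.trans_lt (by rw [← H.norm_sq]; gcongr)
  obtain ⟨b, c, hne, hidem, hrest⟩ :=
    exists_isIdempotentElem_star_mul_mul_of_notMem_spectrum (H.inner_self_nonneg u) hd hgap hdu
  have hub : H.inner (H.smul u b) (H.smul u b) = star b * H.inner u u * b := by
    rw [H.inner_smul_left, H.inner_smul_right, mul_assoc]
  refine ⟨b, ⟨hub ▸ hne, hub ▸ hidem⟩, c, ?_⟩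
  rw [H.norm_eq, H.inner_sub_smul_self]
  exact (Real.sqrt_le_left hε).2 (hrest.trans hdε)

/-- Indexed from `0`; `gramSchmidtResidual ε w j` is the paper's `q̂ⱼ` and
`normalizer ε q̂ⱼ` its `b̂ⱼ`. -/
noncomputable def gramSchmidt (ε : ℝ) (w : ℕ → M) : ℕ → M
  | j =>
    let r := w j - ∑ i : Fin j, H.smul (gramSchmidt ε w i) (H.inner (gramSchmidt ε w i) (w j))
    if ‖r‖ ≤ ε then 0 else H.smul r (H.normalizer ε r)
  decreasing_by exact i.2

noncomputable def gramSchmidtResidual (ε : ℝ) (w : ℕ → M) (j : ℕ) : M :=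
  w j - ∑ i ∈ range j, H.smul (H.gramSchmidt ε w i) (H.inner (H.gramSchmidt ε w i) (w j))

theorem gramSchmidt_def (ε : ℝ) (w : ℕ → M) (j : ℕ) :
    H.gramSchmidt ε w j = if ‖H.gramSchmidtResidual ε w j‖ ≤ ε then 0 else
      H.smul (H.gramSchmidtResidual ε w j) (H.normalizer ε (H.gramSchmidtResidual ε w j)) := by
  rw [gramSchmidt, gramSchmidtResidual, Fin.sum_univ_eq_sum_range
    (fun i ↦ H.smul (H.gramSchmidt ε w i) (H.inner (H.gramSchmidt ε w i) (w j)))]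

variable {H} {ε : ℝ} {w : ℕ → M}

theorem gramSchmidtResidual_mem_span_of_forall_lt {j : ℕ}
    (h : ∀ i < j, H.gramSchmidt ε w i ∈ H.span w (i + 1)) :
    H.gramSchmidtResidual ε w j ∈ H.span w (j + 1) :=
  sub_mem (mem_span_of_lt w j.lt_succ_self) <| AddSubgroup.sum_mem _ fun i hi ↦
    smul_mem_span (span_mono w (Nat.succ_le_succ (mem_range.1 hi).le) (h i (mem_range.1 hi))) _

variable (H ε w) in
theorem gramSchmidt_mem_span (j : ℕ) : H.gramSchmidt ε w j ∈ H.span w (j + 1) := by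
  induction j using Nat.strong_induction_on with
  | _ j ih =>
    rw [gramSchmidt_def]
    split_ifs
    · exact zero_mem _
    · exact smul_mem_span (gramSchmidtResidual_mem_span_of_forall_lt ih) _

variable (H ε w) in
theorem gramSchmidtResidual_mem_span (j : ℕ) : H.gramSchmidtResidual ε w j ∈ H.span w (j + 1) :=
  gramSchmidtResidual_mem_span_of_forall_lt fun i _ ↦ H.gramSchmidt_mem_span ε w i

variable (H ε w) in
def ResidualsNormalizable : Prop :=
  ∀ j, ε < ‖H.gramSchmidtResidual ε w j‖ → ∃ b, H.IsNormalizer ε (H.gramSchmidtResidual ε w j) b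

theorem gramSchmidt_eq_zero_or_eq_smul (hN : H.ResidualsNormalizable ε w) (j : ℕ) :
    (H.gramSchmidt ε w j = 0 ∧ ‖H.gramSchmidtResidual ε w j‖ ≤ ε) ∨
      ∃ b, H.IsNormalizer ε (H.gramSchmidtResidual ε w j) b ∧
        H.gramSchmidt ε w j = H.smul (H.gramSchmidtResidual ε w j) b := by
  rw [gramSchmidt_def]
  split_ifs with hr
  · exact .inl ⟨rfl, hr⟩
  · exact .inr ⟨_, Classical.epsilon_spec (hN j (not_le.1 hr)), rfl⟩

theorem gramSchmidt_eq_zero_or_isNormalized (hN : H.ResidualsNormalizable ε w) (j : ℕ) :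
    H.gramSchmidt ε w j = 0 ∨ H.IsNormalized (H.gramSchmidt ε w j) := by
  rcases gramSchmidt_eq_zero_or_eq_smul hN j with ⟨hq, -⟩ | ⟨b, hb, hq⟩
  · exact .inl hq
  · exact .inr (hq ▸ hb.1)

theorem isIdempotentElem_inner_gramSchmidt (hN : H.ResidualsNormalizable ε w) (j : ℕ) :
    IsIdempotentElem (H.inner (H.gramSchmidt ε w j) (H.gramSchmidt ε w j)) := by
  rcases gramSchmidt_eq_zero_or_isNormalized hN j with hq | hq
  · rw [hq, H.inner_zero_left]; exact .zero
  · exact hq.2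

theorem inner_gramSchmidt_of_lt (hN : H.ResidualsNormalizable ε w) {i j : ℕ} (hij : i < j) :
    H.inner (H.gramSchmidt ε w i) (H.gramSchmidt ε w j) = 0 := by
  induction j using Nat.strong_induction_on generalizing i with
  | _ j ih =>
    have hres : H.inner (H.gramSchmidt ε w i) (H.gramSchmidtResidual ε w j) = 0 := by
      refine H.inner_sub_sum_smul_inner (mem_range.2 hij)
        (isIdempotentElem_inner_gramSchmidt hN i) (fun k hk hki ↦ ?_) (w j)
      rcases hki.lt_or_gt with hki | hik
      · rw [← H.star_inner, ih i hij hki, star_zero]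
      · exact ih k (mem_range.1 hk) hik
    rcases gramSchmidt_eq_zero_or_eq_smul hN j with ⟨hq, -⟩ | ⟨b, -, hq⟩
    · rw [hq, H.inner_zero_right]
    · rw [hq, H.inner_smul_right, hres, zero_mul]

theorem inner_gramSchmidt_of_ne (hN : H.ResidualsNormalizable ε w) {i j : ℕ} (hij : i ≠ j) :
    H.inner (H.gramSchmidt ε w i) (H.gramSchmidt ε w j) = 0 := by
  rcases hij.lt_or_gt with hij | hji
  · exact inner_gramSchmidt_of_lt hN hij
  · rw [← H.star_inner, inner_gramSchmidt_of_lt hN hji, star_zero]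

theorem exists_norm_gramSchmidtResidual_sub_smul_le (hN : H.ResidualsNormalizable ε w)
    (j : ℕ) :
    ∃ c : A, ‖H.gramSchmidtResidual ε w j - H.smul (H.gramSchmidt ε w j) c‖ ≤ ε := by
  rcases gramSchmidt_eq_zero_or_eq_smul hN j with ⟨hq, hr⟩ | ⟨b, ⟨-, c, hc⟩, hq⟩
  · exact ⟨0, by rwa [hq, H.zero_smul, sub_zero]⟩
  · exact ⟨c, by rwa [hq, ← H.smul_mul]⟩

theorem exists_norm_sub_sum_smul_gramSchmidt_le (hN : H.ResidualsNormalizable ε w)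
    (j : ℕ) :
    ∃ c : ℕ → A, ‖w j - ∑ i ∈ range (j + 1), H.smul (H.gramSchmidt ε w i) (c i)‖ ≤ ε := by
  classical
  obtain ⟨c, hc⟩ := exists_norm_gramSchmidtResidual_sub_smul_le hN j
  refine ⟨Function.update (fun i ↦ H.inner (H.gramSchmidt ε w i) (w j)) j c, ?_⟩
  rw [sum_range_succ, Function.update_self,
    sum_congr rfl fun i hi ↦ by rw [Function.update_of_ne (mem_range.1 hi).ne], ← sub_sub]
  exact hc

end

section BoundedOperators

variable {W : Type*} [NormedAddCommGroup W] [InnerProductSpace ℂ W] [CompleteSpace W]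
  {M : Type*} [NormedAddCommGroup M] {H : HilbertCStarModule (W →L[ℂ] W) M}

theorem isCompactOperator_inner_of_mem_span {w : ℕ → M}
    (hw : ∀ i j, IsCompactOperator (H.inner (w i) (w j))) {m n : ℕ} {u v : M}
    (hu : u ∈ H.span w m) (hv : v ∈ H.span w n) : IsCompactOperator (H.inner u v) := by
  obtain ⟨c, rfl⟩ := hu
  obtain ⟨d, rfl⟩ := hv
  rw [H.inner_sum_left]
  refine Submodule.sum_mem (compactOperator (RingHom.id ℂ) W W) fun i _ ↦ ?_
  rw [H.inner_sum_right]
  refine Submodule.sum_mem _ fun j _ ↦ ?_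
  rw [H.inner_smul_left, H.inner_smul_right, ← mul_assoc]
  exact ((hw i j).clm_comp (star (c i))).comp_clm (d j)

theorem exists_isNormalizer_of_isCompactOperator {u : M} (hu : IsCompactOperator (H.inner u u))
    {ε : ℝ} (hε : 0 < ε) (hεu : ε < ‖u‖) : ∃ b, H.IsNormalizer ε u b := by
  have hε2 : 0 < ε ^ 2 / 2 := by positivity
  obtain ⟨d, hd, hgap⟩ := not_subset.1 <| hu.not_Ioo_subset_spectrum
    (.of_nonneg (H.inner_self_nonneg u)) hε2 (half_lt_self (by positivity))
  exact H.exists_isNormalizer_of_notMem_spectrum hε.le (hε2.trans hd.1) hd.2.le hgap hεu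

end BoundedOperators

end HilbertCStarModule

open HilbertCStarModule in
theorem gram_schmidt_in_module_over_BW_general
    {W : Type*} [NormedAddCommGroup W] [InnerProductSpace ℂ W] [CompleteSpace W]
    {M : Type*} [NormedAddCommGroup M]
    (H : HilbertCStarModule (W →L[ℂ] W) M)
    (w : ℕ → M)
    (h_compact : ∀ i j : ℕ, IsCompactOperator ⇑(H.inner (w i) (w j)))
    (ε : ℝ) (hε : 0 < ε) :
    ∃ q : ℕ → M,
      (∀ j : ℕ, q j = 0 ∨
        (H.inner (q j) (q j) ≠ 0 ∧
          H.inner (q j) (q j) * H.inner (q j) (q j) = H.inner (q j) (q j))) ∧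
      (∀ i j : ℕ, i ≠ j → H.inner (q i) (q j) = 0) ∧
      (∀ j : ℕ, q j ∈ closure {u : M | ∃ c : Fin (j + 1) → (W →L[ℂ] W),
        u = ∑ i, H.smul (w i.val) (c i)}) ∧
      (∀ j : ℕ, ∃ v ∈ closure {u : M | ∃ (s : Finset ℕ) (c : ℕ → (W →L[ℂ] W)),
        u = ∑ i ∈ s, H.smul (q i) (c i)}, ‖w j - v‖ ≤ ε) := by
  have hN : H.ResidualsNormalizable ε w := fun j hj ↦
    have hr := H.gramSchmidtResidual_mem_span ε w j
    exists_isNormalizer_of_isCompactOperator (isCompactOperator_inner_of_mem_span h_compact hr hr)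
      hε hj
  refine ⟨H.gramSchmidt ε w, gramSchmidt_eq_zero_or_isNormalized hN,
    fun i j hij ↦ inner_gramSchmidt_of_ne hN hij,
    fun j ↦ subset_closure (H.gramSchmidt_mem_span ε w j), fun j ↦ ?_⟩
  obtain ⟨c, hc⟩ := exists_norm_sub_sum_smul_gramSchmidt_le hN j
  exact ⟨_, subset_closure ⟨range (j + 1), c, rfl⟩, hc⟩

/-- **Gram–Schmidt orthonormalization in Hilbert C*-modules over `B(W)`.** Given a sequence
`(w i)` with all `⟨w i, w j⟩` compact operators and `ε > 0`, there is a sequence `(q j)` of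
vectors, each zero or normalized, mutually orthogonal, with `q j` in the closed submodule
generated by `w 0, …, w j`, and such that each `w j` lies within `ε` of the closed submodule
generated by all the `q i`. -/
theorem gram_schmidt_in_module_over_BW
    {W : Type*} [NormedAddCommGroup W] [InnerProductSpace ℂ W] [CompleteSpace W]
    {M : Type*} [NormedAddCommGroup M] [CompleteSpace M]
    (H : HilbertCStarModule (W →L[ℂ] W) M)
    (w : ℕ → M)
    (h_compact : ∀ i j : ℕ, IsCompactOperator ⇑(H.inner (w i) (w j)))
    (ε : ℝ) (hε : 0 < ε) :
    ∃ q : ℕ → M,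
      (∀ j : ℕ, q j = 0 ∨
        (H.inner (q j) (q j) ≠ 0 ∧
          H.inner (q j) (q j) * H.inner (q j) (q j) = H.inner (q j) (q j))) ∧
      (∀ i j : ℕ, i ≠ j → H.inner (q i) (q j) = 0) ∧
      (∀ j : ℕ, q j ∈ closure {u : M | ∃ c : Fin (j + 1) → (W →L[ℂ] W),
        u = ∑ i, H.smul (w i.val) (c i)}) ∧
      (∀ j : ℕ, ∃ v ∈ closure {u : M | ∃ (s : Finset ℕ) (c : ℕ → (W →L[ℂ] W)),
        u = ∑ i ∈ s, H.smul (q i) (c i)}, ‖w j - v‖ ≤ ε) :=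
  gram_schmidt_in_module_over_BW_general H w h_compact ε hε
end

section
/- Let m ∈ ℕ and let A = ℂ^{m×m} be the C*-algebra of m×m complex matrices with the operator norm. Let M be a Banach A-module and M₀ an A-submodule of M. If the only bounded A-linear map f : M → A satisfying f(u) = 0 for all u ∈ M₀ is the zero map, then M₀ is dense in M. -/
/-!
If `M₀` is not dense, Hahn-Banach gives a nonzero continuous functional `φ : M → ℂ` vanishing on
`M₀`. Since the trace pairing on `A` is nondegenerate, there is a unique `f : M → A` with
`trace (f u * c) = φ (u • c)` for all `c`; it is bounded, `A`-linear (by associativity of the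
action) and vanishes on `M₀`, yet `trace (f u) = φ u`, so `f ≠ 0`.
-/

open scoped Matrix.Norms.L2Operator

/-- A Banach module over the C*-algebra `A = ℂ^{m×m}` of `m × m` complex matrices with the
operator norm: a complex Banach space `M` with a right `A`-module structure satisfying
`‖u·c‖ ≤ ‖u‖ ‖c‖`, compatibly with the complex scalar actions. -/
structure BanachMatrixModule (m : ℕ) (M : Type*) [NormedAddCommGroup M] [NormedSpace ℂ M] where
  smul : M → Matrix (Fin m) (Fin m) ℂ → M
  add_smul : ∀ (u v : M) (c : Matrix (Fin m) (Fin m) ℂ), smul (u + v) c = smul u c + smul v c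
  smul_add : ∀ (u : M) (c d : Matrix (Fin m) (Fin m) ℂ), smul u (c + d) = smul u c + smul u d
  smul_mul : ∀ (u : M) (c d : Matrix (Fin m) (Fin m) ℂ), smul u (c * d) = smul (smul u c) d
  smul_one : ∀ u : M, smul u 1 = u
  smul_complex : ∀ (α : ℂ) (u : M) (c : Matrix (Fin m) (Fin m) ℂ),
    smul u (α • c) = α • smul u c
  norm_smul_le : ∀ (u : M) (c : Matrix (Fin m) (Fin m) ℂ), ‖smul u c‖ ≤ ‖u‖ * ‖c‖

theorem Submodule.dense_of_forall_dual_eq_zero {𝕜 E : Type*} [RCLike 𝕜] [NormedAddCommGroup E]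
    [NormedSpace 𝕜 E] (p : Submodule 𝕜 E)
    (h : ∀ φ : StrongDual 𝕜 E, (∀ y ∈ p, φ y = 0) → φ = 0) : Dense (p : Set E) := by
  by_contra hp
  obtain ⟨x, hx⟩ := not_forall.mp hp
  let q := p.topologicalClosure
  have : IsClosed (q : Set E) := p.isClosed_topologicalClosure
  have hxq : Submodule.Quotient.mk x ≠ (0 : E ⧸ q) :=
    (Submodule.Quotient.mk_eq_zero q).not.mpr hx
  obtain ⟨g, hg⟩ := SeparatingDual.exists_ne_zero (R := 𝕜) hxq
  have hφ := h (g.comp q.mkQL) fun y hy => by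
    simp [(Submodule.Quotient.mk_eq_zero q).mpr (p.le_topologicalClosure hy)]
  exact hg (by simpa using congrArg (· x) hφ)

noncomputable section

namespace BanachMatrixModule

variable {m : ℕ} {M : Type*} [NormedAddCommGroup M] [NormedSpace ℂ M] (B : BanachMatrixModule m M)

theorem complex_smul_eq_smul (α : ℂ) (u : M) : α • u = B.smul u (α • 1) := by
  rw [B.smul_complex, B.smul_one]

theorem smul_complex_smul (α : ℂ) (u : M) (c : Matrix (Fin m) (Fin m) ℂ) :
    B.smul (α • u) c = α • B.smul u c := by
  rw [B.complex_smul_eq_smul, ← B.smul_mul, smul_one_mul, B.smul_complex]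

def smulₗ (u : M) : Matrix (Fin m) (Fin m) ℂ →ₗ[ℂ] M where
  toFun := B.smul u
  map_add' := B.smul_add u
  map_smul' α c := B.smul_complex α u c

def smulCLM (c : Matrix (Fin m) (Fin m) ℂ) : M →L[ℂ] M :=
  LinearMap.mkContinuous
    { toFun := (B.smul · c)
      map_add' := (B.add_smul · · c)
      map_smul' := (B.smul_complex_smul · · c) }
    ‖c‖ fun u => (B.norm_smul_le u c).trans_eq (mul_comm _ _)

def traceLift (φ : StrongDual ℂ M) : M →L[ℂ] Matrix (Fin m) (Fin m) ℂ where
  toFun u := Matrix.of fun i j => φ (B.smul u (Matrix.single j i 1))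
  map_add' u v := by ext i j; simp [B.add_smul]
  map_smul' α u := by ext i j; simp [B.smul_complex_smul]
  cont := continuous_matrix fun i j => (φ.comp (B.smulCLM (Matrix.single j i 1))).continuous

theorem trace_traceLift_mul (φ : StrongDual ℂ M) (u : M) (c : Matrix (Fin m) (Fin m) ℂ) :
    (B.traceLift φ u * c).trace = φ (B.smul u c) := by
  have := (Matrix.stdBasis ℂ (Fin m) (Fin m)).ext
    (f₁ := Matrix.traceLinearMap (Fin m) ℂ ℂ ∘ₗ LinearMap.mulLeft ℂ (B.traceLift φ u))
    (f₂ := φ.toLinearMap ∘ₗ B.smulₗ u) fun ⟨i, j⟩ => by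
      simp [Matrix.stdBasis_eq_single, Matrix.trace_mul_single, traceLift, smulₗ]
  exact LinearMap.congr_fun this c

theorem traceLift_smul (φ : StrongDual ℂ M) (u : M) (c : Matrix (Fin m) (Fin m) ℂ) :
    B.traceLift φ (B.smul u c) = B.traceLift φ u * c :=
  Matrix.ext_iff_trace_mul_right.mpr fun d => by
    rw [B.trace_traceLift_mul, ← B.smul_mul, Matrix.mul_assoc, B.trace_traceLift_mul]

theorem trace_traceLift (φ : StrongDual ℂ M) (u : M) : (B.traceLift φ u).trace = φ u := by
  rw [← Matrix.mul_one (B.traceLift φ u), B.trace_traceLift_mul, B.smul_one]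

end BanachMatrixModule

end

theorem dense_of_orthogonal_complement_trivial_general {m : ℕ} {M : Type*}
    [NormedAddCommGroup M] [NormedSpace ℂ M]
    (B : BanachMatrixModule m M)
    (M₀ : Set M) (h_zero : (0 : M) ∈ M₀)
    (h_add : ∀ u ∈ M₀, ∀ v ∈ M₀, u + v ∈ M₀)
    (h_smul : ∀ u ∈ M₀, ∀ c : Matrix (Fin m) (Fin m) ℂ, B.smul u c ∈ M₀)
    (h_perp : ∀ f : M → Matrix (Fin m) (Fin m) ℂ,
      (∀ u v : M, f (u + v) = f u + f v) →
      (∀ (α : ℂ) (u : M), f (α • u) = α • f u) →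
      (∀ (u : M) (c : Matrix (Fin m) (Fin m) ℂ), f (B.smul u c) = f u * c) →
      (∃ C : ℝ, ∀ u : M, ‖f u‖ ≤ C * ‖u‖) →
      (∀ u ∈ M₀, f u = 0) →
      ∀ u : M, f u = 0) :
    Dense M₀ := by
  let p : Submodule ℂ M :=
    { carrier := M₀
      zero_mem' := h_zero
      add_mem' := fun {u v} hu hv => h_add u hu v hv
      smul_mem' := fun α u hu => B.complex_smul_eq_smul α u ▸ h_smul u hu _ }
  refine p.dense_of_forall_dual_eq_zero fun φ hφ => ?_
  let f := B.traceLift φ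
  have hf_vanish : ∀ u ∈ M₀, f u = 0 := fun u hu =>
    Matrix.ext_iff_trace_mul_right.mpr fun c => by
      rw [B.trace_traceLift_mul, hφ _ (h_smul u hu c), Matrix.zero_mul, Matrix.trace_zero]
  have hf_zero := h_perp f f.map_add f.map_smul (B.traceLift_smul φ) ⟨‖f‖, f.le_opNorm⟩
    hf_vanish
  ext x
  rw [← B.trace_traceLift, hf_zero, Matrix.trace_zero, zero_apply]

/-- **Triviality of the orthogonal complement implies density.** If the only bounded
`A`-linear map `f : M → A` (`A = ℂ^{m×m}` with the operator norm) vanishing on an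
`A`-submodule `M₀` is the zero map, then `M₀` is dense in `M`. -/
theorem dense_of_orthogonal_complement_trivial {m : ℕ} {M : Type*}
    [NormedAddCommGroup M] [NormedSpace ℂ M] [CompleteSpace M]
    (B : BanachMatrixModule m M)
    (M₀ : Set M) (h_zero : (0 : M) ∈ M₀)
    (h_add : ∀ u ∈ M₀, ∀ v ∈ M₀, u + v ∈ M₀)
    (h_smul : ∀ u ∈ M₀, ∀ c : Matrix (Fin m) (Fin m) ℂ, B.smul u c ∈ M₀)
    (h_perp : ∀ f : M → Matrix (Fin m) (Fin m) ℂ,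
      (∀ u v : M, f (u + v) = f u + f v) →
      (∀ (α : ℂ) (u : M), f (α • u) = α • f u) →
      (∀ (u : M) (c : Matrix (Fin m) (Fin m) ℂ), f (B.smul u c) = f u * c) →
      (∃ C : ℝ, ∀ u : M, ‖f u‖ ≤ C * ‖u‖) →
      (∀ u ∈ M₀, f u = 0) →
      ∀ u : M, f u = 0) :
    Dense M₀ :=
  dense_of_orthogonal_complement_trivial_general B M₀ h_zero h_add h_smul h_perp
end
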